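/- (Aperture change for the averaged non-tangential maximal function.) Let n ≥ 1 and let u : ℝⁿ × (0,∞) → ℂ be measurable. For β > 0 define 𝓝^β u(x) := sup_{(y,t) : |x−y| < βt} ( (βt)^{−n} ∫_{B(y,βt)} |u(z,t)|² dz )^{1/2}. Then there exists a constant C = C(n) > 0 such that for every β ≥ 1, ‖𝓝^β u‖_{L¹(ℝⁿ)} ≤ C βⁿ ‖𝓝¹ u‖_{L¹(ℝⁿ)}. -/

import Mathlib

/-!
If `𝓝^β u(x) > 2^{n+1} λ` is witnessed by `(y, t)`, then `{𝓝¹ u > λ}` fills at least half of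
`B(x, t)` inside `B̄(x, 3βt)`. Otherwise every ball `B(z, t)` with `z ∈ B(y, βt)` meets the set
`G = B(y, (β+1)t) \ {𝓝¹ u > λ}` in half its measure, and double counting `∫_{B(y,βt)} |u(·,t)|²`
against the balls `B(x', t)`, `x' ∈ G` (on each of which the average is at most `λ²`) bounds the
average over `B(y, βt)` by `2^{n+1} λ²`. A Vitali covering by the balls `B̄(x, 3βt)` turns this
into `|{𝓝^β u > 2^{n+1} λ}| ≤ 2 (12β)ⁿ |{𝓝¹ u > λ}|`, and the layer cake formula integrates it.
-/

open MeasureTheory Set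
open scoped ENNReal

noncomputable section

/-- The averaged non-tangential maximal function of aperture `β`:
`𝓝^β u (x) = sup_{(y,t) : |x−y| < βt, t > 0} ( (βt)^{−n} ∫_{B(y,βt)} |u(z,t)|² dz )^{1/2}`. -/
def ntMax (n : ℕ) (β : ℝ) (u : EuclideanSpace ℝ (Fin n) × ℝ → ℂ)
    (x : EuclideanSpace ℝ (Fin n)) : ℝ≥0∞ :=
  ⨆ (y : EuclideanSpace ℝ (Fin n)) (t : ℝ) (_ : 0 < t) (_ : dist x y < β * t),
    ((∫⁻ z in Metric.ball y (β * t), (‖u (z, t)‖₊ : ℝ≥0∞) ^ 2) /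
        ENNReal.ofReal ((β * t) ^ n)) ^ (1 / 2 : ℝ)

open Metric TopologicalSpace

section LayerCake

variable {α : Type*} [MeasurableSpace α]

theorem volume_restrict_Ioi_setOf_ofReal_lt (a : ℝ≥0∞) :
    volume.restrict (Ioi (0 : ℝ)) {s | ENNReal.ofReal s < a} = a := by
  rw [Measure.restrict_apply (measurableSet_lt ENNReal.measurable_ofReal measurable_const)]
  rcases eq_or_ne a ∞ with rfl | ha
  · simp [Real.volume_Ioi]
  · have : {s : ℝ | ENNReal.ofReal s < a} ∩ Ioi 0 = Ioo 0 a.toReal := by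
      ext s
      simp only [mem_inter_iff, mem_ofPred_eq, mem_Ioi, mem_Ioo]
      exact ⟨fun h => ⟨h.2, (ENNReal.ofReal_lt_iff_lt_toReal h.2.le ha).1 h.1⟩,
        fun h => ⟨(ENNReal.ofReal_lt_iff_lt_toReal h.1.le ha).2 h.2, h.1⟩⟩
    rw [this, Real.volume_Ioo, sub_zero, ENNReal.ofReal_toReal ha]

theorem lintegral_eq_lintegral_meas_ofReal_lt (μ : Measure α) [SFinite μ] {f : α → ℝ≥0∞}
    (hf : Measurable f) :
    ∫⁻ x, f x ∂μ = ∫⁻ s in Ioi 0, μ {x | ENNReal.ofReal s < f x} := by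
  have hS : MeasurableSet {p : α × ℝ | ENNReal.ofReal p.2 < f p.1} :=
    measurableSet_lt (ENNReal.measurable_ofReal.comp measurable_snd) (hf.comp measurable_fst)
  calc ∫⁻ x, f x ∂μ = ∫⁻ x, volume.restrict (Ioi 0) {s | ENNReal.ofReal s < f x} ∂μ := by
        simp_rw [volume_restrict_Ioi_setOf_ofReal_lt]
    _ = (μ.prod (volume.restrict (Ioi 0))) {p | ENNReal.ofReal p.2 < f p.1} :=
        (Measure.prod_apply hS).symm
    _ = ∫⁻ s in Ioi 0, μ {x | ENNReal.ofReal s < f x} := Measure.prod_apply_symm hS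

theorem lintegral_le_mul_of_meas_lt_le (μ : Measure α) [SFinite μ] {f g : α → ℝ≥0∞}
    (hf : Measurable f) (hg : Measurable g) {A K : ℝ≥0∞} (hA₀ : A ≠ 0) (hA : A ≠ ∞)
    (h : ∀ s, μ {x | A * s < f x} ≤ K * μ {x | s < g x}) :
    ∫⁻ x, f x ∂μ ≤ A * K * ∫⁻ x, g x ∂μ := by
  have hlevel : ∀ s : ℝ, μ {x | ENNReal.ofReal s < f x} ≤
      K * μ {x | ENNReal.ofReal s < A * g x} := by
    intro s
    have := h (ENNReal.ofReal s / A)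
    have hset : {x | ENNReal.ofReal s / A < g x} = {x | ENNReal.ofReal s < A * g x} := by
      ext x
      rw [mem_ofPred_eq, mem_ofPred_eq, ENNReal.div_lt_iff (Or.inl hA₀) (Or.inl hA), mul_comm]
    rwa [ENNReal.mul_div_cancel hA₀ hA, hset] at this
  have hanti : Antitone fun s : ℝ => μ {x | ENNReal.ofReal s < A * g x} := fun s s' hss' =>
    measure_mono fun x hx => (ENNReal.ofReal_le_ofReal hss').trans_lt hx
  calc ∫⁻ x, f x ∂μ = ∫⁻ s in Ioi 0, μ {x | ENNReal.ofReal s < f x} :=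
        lintegral_eq_lintegral_meas_ofReal_lt μ hf
    _ ≤ ∫⁻ s in Ioi 0, K * μ {x | ENNReal.ofReal s < A * g x} := lintegral_mono hlevel
    _ = K * ∫⁻ x, A * g x ∂μ := by
        rw [lintegral_const_mul _ hanti.measurable,
          lintegral_eq_lintegral_meas_ofReal_lt μ (hg.const_mul A)]
    _ = A * K * ∫⁻ x, g x ∂μ := by rw [lintegral_const_mul _ hg]; ring

end LayerCake

section Covering

variable {α : Type*} [PseudoMetricSpace α] [MeasurableSpace α] [OpensMeasurableSpace α]

theorem setLIntegral_lintegral_ball_eq [SecondCountableTopology α] (μ : Measure α) [SFinite μ]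
    {f : α → ℝ≥0∞} (hf : Measurable f) (G : Set α) (t : ℝ) :
    ∫⁻ x in G, ∫⁻ z in ball x t, f z ∂μ ∂μ = ∫⁻ z, f z * μ (ball z t ∩ G) ∂μ := by
  have hmeas : Measurable (Function.uncurry fun x z => (ball x t).indicator f z) := by
    have hS : MeasurableSet {p : α × α | p.2 ∈ ball p.1 t} :=
      measurableSet_lt (measurable_snd.dist measurable_fst) measurable_const
    convert (hf.comp measurable_snd).indicator hS using 1
    rfl
  calc ∫⁻ x in G, ∫⁻ z in ball x t, f z ∂μ ∂μ
      = ∫⁻ x in G, ∫⁻ z, (ball x t).indicator f z ∂μ ∂μ := by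
        simp_rw [lintegral_indicator measurableSet_ball]
    _ = ∫⁻ z, ∫⁻ x in G, (ball z t).indicator (fun _ => f z) x ∂μ ∂μ := by
        rw [lintegral_lintegral_swap hmeas.aemeasurable]
        refine lintegral_congr fun z => lintegral_congr fun x => ?_
        classical
        rw [indicator_apply, indicator_apply, mem_ball_comm]
    _ = ∫⁻ z, f z * μ (ball z t ∩ G) ∂μ := by
        simp_rw [lintegral_indicator measurableSet_ball, setLIntegral_const,
          Measure.restrict_apply measurableSet_ball]

theorem measure_le_mul_of_forall_closedBall_of_le [SeparableSpace α] (μ : Measure α)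
    {E F : Set α} (hF : MeasurableSet F) {K : ℝ≥0∞} {τ : ℝ} (hτ : 3 < τ) {r : α → ℝ} {R : ℝ}
    (hr₀ : ∀ x ∈ E, 0 < r x) (hrR : ∀ x ∈ E, r x ≤ R)
    (h : ∀ x ∈ E, μ (closedBall x (τ * r x)) ≤ K * μ (F ∩ closedBall x (r x))) :
    μ E ≤ K * μ F := by
  obtain ⟨v, hvE, hvdisj, hvcov⟩ :=
    Vitali.exists_disjoint_subfamily_covering_enlargement_closedBall E id r R hrR τ hτ
  simp only [id] at hvdisj hvcov
  have hvc : v.Countable :=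
    (hvdisj.mono fun _ => ball_subset_closedBall).countable_of_isOpen (fun _ _ => isOpen_ball)
      fun x hx => ⟨x, mem_ball_self (hr₀ x (hvE hx))⟩
  have hcov : E ⊆ ⋃ x ∈ v, closedBall x (τ * r x) := fun a ha => by
    obtain ⟨b, hb, hsub⟩ := hvcov a ha
    exact mem_biUnion hb (hsub (mem_closedBall_self (hr₀ a ha).le))
  calc μ E ≤ ∑' x : v, μ (closedBall x (τ * r x)) :=
        (measure_mono hcov).trans (measure_biUnion_le μ hvc _)
    _ ≤ ∑' x : v, K * μ (F ∩ closedBall x (r x)) :=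
        ENNReal.tsum_le_tsum fun x => h x (hvE x.2)
    _ = K * μ (⋃ x ∈ v, F ∩ closedBall x (r x)) := by
        rw [ENNReal.tsum_mul_left, measure_biUnion hvc (hvdisj.mono fun _ => inter_subset_right)
          fun _ _ => hF.inter measurableSet_closedBall]
    _ ≤ K * μ F := by gcongr; exact iUnion₂_subset fun _ _ => inter_subset_left

theorem measure_le_mul_of_forall_closedBall [SeparableSpace α] (μ : Measure α)
    {E F : Set α} (hF : MeasurableSet F) {K : ℝ≥0∞} {τ : ℝ} (hτ : 3 < τ)
    (h : ∀ x ∈ E, ∃ r > 0, μ (closedBall x (τ * r)) ≤ K * μ (F ∩ closedBall x r)) :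
    μ E ≤ K * μ F := by
  choose! r hr₀ hr using h
  have hE : E = ⋃ k : ℕ, {x ∈ E | r x ≤ k} := by
    ext x
    simp only [mem_iUnion, mem_ofPred_eq]
    exact ⟨fun hx => (exists_nat_ge (r x)).imp fun _ hk => ⟨hx, hk⟩, fun ⟨_, hx, _⟩ => hx⟩
  have hmono : Monotone fun k : ℕ => {x ∈ E | r x ≤ k} := fun k l hkl x hx =>
    ⟨hx.1, hx.2.trans (Nat.cast_le.2 hkl)⟩
  rw [hE, hmono.measure_iUnion]
  exact iSup_le fun k => measure_le_mul_of_forall_closedBall_of_le μ hF hτ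
    (fun x hx => hr₀ x hx.1) (fun x hx => hx.2) fun x hx => hr x hx.1

theorem mul_setLIntegral_le_of_le_measure_ball_inter [SecondCountableTopology α] (μ : Measure α)
    [SFinite μ] {f : α → ℝ≥0∞} (hf : Measurable f) {S G : Set α} (hS : MeasurableSet S) {t : ℝ}
    {c Λ : ℝ≥0∞} (hG : ∀ x ∈ G, ∫⁻ z in ball x t, f z ∂μ ≤ Λ)
    (hSG : ∀ z ∈ S, c ≤ μ (ball z t ∩ G)) :
    c * ∫⁻ z in S, f z ∂μ ≤ Λ * μ G := calc
  c * ∫⁻ z in S, f z ∂μ = ∫⁻ z in S, c * f z ∂μ := (lintegral_const_mul _ hf).symm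
  _ ≤ ∫⁻ z in S, f z * μ (ball z t ∩ G) ∂μ :=
      setLIntegral_mono' hS fun z hz => by rw [mul_comm]; exact mul_le_mul_right (hSG z hz) _
  _ ≤ ∫⁻ z, f z * μ (ball z t ∩ G) ∂μ := setLIntegral_le_lintegral _ _
  _ = ∫⁻ x in G, ∫⁻ z in ball x t, f z ∂μ ∂μ := (setLIntegral_lintegral_ball_eq μ hf G t).symm
  _ ≤ ∫⁻ _ in G, Λ ∂μ := setLIntegral_mono measurable_const hG
  _ = Λ * μ G := setLIntegral_const _ _

end Covering

section NonTangential

variable {n : ℕ} {β : ℝ} {u : EuclideanSpace ℝ (Fin n) × ℝ → ℂ}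

def ntAvg (n : ℕ) (β : ℝ) (u : EuclideanSpace ℝ (Fin n) × ℝ → ℂ) (y : EuclideanSpace ℝ (Fin n))
    (t : ℝ) : ℝ≥0∞ :=
  ((∫⁻ z in ball y (β * t), (‖u (z, t)‖₊ : ℝ≥0∞) ^ 2) / ENNReal.ofReal ((β * t) ^ n)) ^ (1 / 2 : ℝ)

theorem lt_ntMax_iff {x : EuclideanSpace ℝ (Fin n)} {a : ℝ≥0∞} :
    a < ntMax n β u x ↔ ∃ y t, 0 < t ∧ dist x y < β * t ∧ a < ntAvg n β u y t := by
  simp only [ntMax, ntAvg, lt_iSup_iff, exists_prop]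

theorem lt_ntAvg_iff {y : EuclideanSpace ℝ (Fin n)} {t : ℝ} {a : ℝ≥0∞} (hβt : 0 < β * t) :
    a < ntAvg n β u y t ↔
      a ^ 2 * ENNReal.ofReal ((β * t) ^ n) < ∫⁻ z in ball y (β * t), (‖u (z, t)‖₊ : ℝ≥0∞) ^ 2 := by
  rw [ntAvg, one_div, ENNReal.lt_rpow_inv_iff two_pos, ENNReal.rpow_two,
    ENNReal.lt_div_iff_mul_lt (Or.inl (ENNReal.ofReal_pos.2 (pow_pos hβt n)).ne')
      (Or.inl ENNReal.ofReal_ne_top)]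

theorem lowerSemicontinuous_ntMax : LowerSemicontinuous (ntMax n β u) := fun x a ha => by
  obtain ⟨y, t, ht, hxy, hlt⟩ := lt_ntMax_iff.1 ha
  filter_upwards [isOpen_ball.mem_nhds (mem_ball.2 hxy)] with x' hx'
  exact lt_ntMax_iff.2 ⟨y, t, ht, hx', hlt⟩

theorem measurable_ntMax : Measurable (ntMax n β u) :=
  lowerSemicontinuous_ntMax.measurable

theorem setLIntegral_ball_le_of_ntMax_le {x : EuclideanSpace ℝ (Fin n)} {t : ℝ} {a : ℝ≥0∞}
    (ht : 0 < t) (h : ntMax n 1 u x ≤ a) :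
    ∫⁻ z in ball x t, (‖u (z, t)‖₊ : ℝ≥0∞) ^ 2 ≤ a ^ 2 * ENNReal.ofReal (t ^ n) := by
  have h1t : 0 < 1 * t := by rwa [one_mul]
  have := mt (fun h' => lt_ntMax_iff.2 ⟨x, t, ht, by rwa [dist_self], h'⟩) h.not_gt
  rwa [lt_ntAvg_iff h1t, one_mul, not_lt] at this

theorem two_mul_add_one_pow_le {β : ℝ} (hβ : 1 ≤ β) (n : ℕ) :
    2 * (β + 1) ^ n ≤ (2 ^ (n + 1)) ^ 2 * β ^ n := calc
  2 * (β + 1) ^ n ≤ 2 * (2 * β) ^ n := by gcongr; linarith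
  _ = 2 ^ (n + 1) * β ^ n := by rw [mul_pow, pow_succ]; ring
  _ ≤ (2 ^ (n + 1)) ^ 2 * β ^ n := by
      gcongr; exact le_self_pow₀ (one_le_pow₀ one_le_two) two_ne_zero

theorem measure_ball_div_two_le_measure_ball_inter_diff {E : Type*} [NormedAddCommGroup E]
    [NormedSpace ℝ E] [MeasurableSpace E] [BorelSpace E] [FiniteDimensional ℝ E] (μ : Measure E)
    [μ.IsAddHaarMeasure] {F : Set E} {x y z : E} {t : ℝ} (hβ : 1 ≤ β) (ht : 0 < t)
    (hxy : dist x y < β * t) (hz : z ∈ ball y (β * t))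
    (hF : 2 * μ (F ∩ closedBall x (3 * (β * t))) < μ (ball x t)) :
    μ (ball x t) / 2 ≤ μ (ball z t ∩ (ball y ((β + 1) * t) \ F)) := by
  rw [mem_ball] at hz
  set D := μ (F ∩ closedBall x (3 * (β * t)))
  set b := μ (ball z t ∩ (ball y ((β + 1) * t) \ F))
  have hsub : ball z t ⊆
      (ball z t ∩ (ball y ((β + 1) * t) \ F)) ∪ (F ∩ closedBall x (3 * (β * t))) := by
    intro w hw
    by_cases hwF : w ∈ F
    · refine Or.inr ⟨hwF, mem_closedBall.2 ?_⟩
      linarith [mem_ball.1 hw, dist_triangle w z x, dist_triangle z y x, dist_comm x y,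
        le_mul_of_one_le_left ht.le hβ]
    · exact Or.inl ⟨hw, ball_subset_ball' (by linarith) hw, hwF⟩
  have hle : μ (ball x t) ≤ b + D := by
    rw [Measure.addHaar_ball_of_pos μ x ht, ← Measure.addHaar_ball_of_pos μ z ht]
    exact (measure_mono hsub).trans (measure_union_le _ _)
  refine ENNReal.div_le_of_le_mul (not_lt.1 fun hb => lt_irrefl (μ (ball x t) + μ (ball x t)) ?_)
  calc μ (ball x t) + μ (ball x t) ≤ (b + D) + (b + D) := add_le_add hle hle
    _ = b * 2 + 2 * D := by ring
    _ < μ (ball x t) + μ (ball x t) := ENNReal.add_lt_add hb hF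

theorem volume_ball_le_two_mul_volume_inter_setOf_lt_ntMax (hβ : 1 ≤ β) (hu : Measurable u)
    {a : ℝ≥0∞} {x y : EuclideanSpace ℝ (Fin n)} {t : ℝ} (ht : 0 < t) (hxy : dist x y < β * t)
    (hlt : 2 ^ (n + 1) * a < ntAvg n β u y t) :
    volume (ball x t) ≤ 2 * volume ({x' | a < ntMax n 1 u x'} ∩ closedBall x (3 * (β * t))) := by
  have hvol : ∀ (z : EuclideanSpace ℝ (Fin n)) (r : ℝ), 0 < r →
      volume (ball z r) = ENNReal.ofReal (r ^ n) * volume (ball (0 : EuclideanSpace ℝ (Fin n)) 1) :=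
    fun z r hr => by rw [Measure.addHaar_ball_of_pos volume z hr, finrank_euclideanSpace_fin]
  have hV₀ : volume (ball x t) / 2 ≠ 0 :=
    (ENNReal.div_pos (measure_ball_pos _ _ ht).ne' ENNReal.ofNat_ne_top).ne'
  have hVtop : volume (ball x t) / 2 ≠ ∞ := ENNReal.div_ne_top measure_ball_lt_top.ne two_ne_zero
  have hV := hvol x t ht
  set V := volume (ball x t)
  set F := {x' | a < ntMax n 1 u x'}
  set G := ball y ((β + 1) * t) \ F
  set Λ := a ^ 2 * ENNReal.ofReal (t ^ n)
  have hf : Measurable fun z => (‖u (z, t)‖₊ : ℝ≥0∞) ^ 2 :=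
    ((hu.comp (measurable_id.prodMk measurable_const)).nnnorm.coe_nnreal_ennreal).pow_const 2
  by_contra! hD
  have hdens : ∀ z ∈ ball y (β * t), V / 2 ≤ volume (ball z t ∩ G) := fun z hz =>
    measure_ball_div_two_le_measure_ball_inter_diff volume hβ ht hxy hz hD
  have hI : ∫⁻ z in ball y (β * t), (‖u (z, t)‖₊ : ℝ≥0∞) ^ 2 ≤
      2 * a ^ 2 * ENNReal.ofReal ((β + 1) ^ n * t ^ n) := by
    refine (ENNReal.mul_le_mul_iff_right hV₀ hVtop).1 ?_
    calc V / 2 * ∫⁻ z in ball y (β * t), (‖u (z, t)‖₊ : ℝ≥0∞) ^ 2 ≤ Λ * volume G :=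
          mul_setLIntegral_le_of_le_measure_ball_inter volume hf measurableSet_ball
            (fun x' hx' => setLIntegral_ball_le_of_ntMax_le ht (not_lt.1 hx'.2)) hdens
      _ ≤ Λ * volume (ball y ((β + 1) * t)) := by gcongr; exact sdiff_subset
      _ = V / 2 * 2 * (a ^ 2 * ENNReal.ofReal ((β + 1) ^ n * t ^ n)) := by
          rw [ENNReal.div_mul_cancel two_ne_zero ENNReal.ofNat_ne_top, hvol y _ (by positivity),
            hV, mul_pow, ENNReal.ofReal_mul (by positivity)]
          ring
      _ = V / 2 * (2 * a ^ 2 * ENNReal.ofReal ((β + 1) ^ n * t ^ n)) := by ring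
  have harith : 2 * a ^ 2 * ENNReal.ofReal ((β + 1) ^ n * t ^ n) ≤
      (2 ^ (n + 1) * a) ^ 2 * ENNReal.ofReal ((β * t) ^ n) := calc
    2 * a ^ 2 * ENNReal.ofReal ((β + 1) ^ n * t ^ n)
        = a ^ 2 * ENNReal.ofReal (2 * (β + 1) ^ n * t ^ n) := by
          rw [mul_assoc (2 : ℝ), ENNReal.ofReal_mul zero_le_two, ENNReal.ofReal_ofNat]; ring
    _ ≤ a ^ 2 * ENNReal.ofReal ((2 ^ (n + 1)) ^ 2 * β ^ n * t ^ n) := by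
          gcongr a ^ 2 * ENNReal.ofReal (?_ * t ^ n); exact two_mul_add_one_pow_le hβ n
    _ = (2 ^ (n + 1) * a) ^ 2 * ENNReal.ofReal ((β * t) ^ n) := by
          rw [mul_assoc _ (β ^ n), ← mul_pow, ENNReal.ofReal_mul (by positivity),
            ENNReal.ofReal_pow (by positivity : (0 : ℝ) ≤ 2 ^ (n + 1)) 2,
            ENNReal.ofReal_pow zero_le_two, ENNReal.ofReal_ofNat]; ring
  exact ((lt_ntAvg_iff (by positivity)).1 hlt).not_ge (hI.trans harith)

theorem volume_setOf_lt_ntMax_le (hβ : 1 ≤ β) (hu : Measurable u) (a : ℝ≥0∞) :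
    volume {x | 2 ^ (n + 1) * a < ntMax n β u x} ≤
      2 * ENNReal.ofReal ((12 * β) ^ n) * volume {x | a < ntMax n 1 u x} := by
  refine measure_le_mul_of_forall_closedBall volume
    (measurableSet_lt measurable_const measurable_ntMax) (τ := 4) (by norm_num) fun x hx => ?_
  obtain ⟨y, t, ht, hxy, hlt⟩ := lt_ntMax_iff.1 hx
  have hβ₀ : 0 < β := one_pos.trans_le hβ
  refine ⟨3 * (β * t), by positivity, ?_⟩
  calc volume (closedBall x (4 * (3 * (β * t))))
      = ENNReal.ofReal ((12 * β) ^ n) * volume (ball x t) := by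
        rw [Measure.addHaar_closedBall volume x (by positivity),
          Measure.addHaar_ball_of_pos volume x ht, finrank_euclideanSpace_fin,
          ← mul_assoc (ENNReal.ofReal _), ← ENNReal.ofReal_mul (by positivity), ← mul_pow]
        ring_nf
    _ ≤ ENNReal.ofReal ((12 * β) ^ n) *
          (2 * volume ({x' | a < ntMax n 1 u x'} ∩ closedBall x (3 * (β * t)))) := by
        gcongr
        exact volume_ball_le_two_mul_volume_inter_setOf_lt_ntMax hβ hu ht hxy hlt
    _ = 2 * ENNReal.ofReal ((12 * β) ^ n) *
          volume ({x' | a < ntMax n 1 u x'} ∩ closedBall x (3 * (β * t))) := by ring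

end NonTangential

theorem stmt7_general (n : ℕ) :
    ∃ C : ℝ, 0 < C ∧
      ∀ β : ℝ, 1 ≤ β →
        ∀ u : EuclideanSpace ℝ (Fin n) × ℝ → ℂ, Measurable u →
          ∫⁻ x, ntMax n β u x ≤ ENNReal.ofReal (C * β ^ n) * ∫⁻ x, ntMax n 1 u x := by
  refine ⟨4 * 24 ^ n, by positivity, fun β hβ u hu => ?_⟩
  have hC : ENNReal.ofReal (4 * 24 ^ n * β ^ n) =
      2 ^ (n + 1) * (2 * ENNReal.ofReal ((12 * β) ^ n)) := by
    rw [show (4 : ℝ) * 24 ^ n * β ^ n = 2 ^ (n + 1) * (2 * (12 * β) ^ n) by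
        rw [show (24 : ℝ) = 2 * 12 by norm_num, mul_pow, mul_pow, pow_succ]; ring,
      ENNReal.ofReal_mul (by positivity), ENNReal.ofReal_mul zero_le_two,
      ENNReal.ofReal_pow zero_le_two, ENNReal.ofReal_ofNat]
  rw [hC]
  exact lintegral_le_mul_of_meas_lt_le volume measurable_ntMax measurable_ntMax (by simp) (by simp)
    (volume_setOf_lt_ntMax_le hβ hu)

/-- Aperture change for the averaged non-tangential maximal function: there is a constant
`C = C(n) > 0` such that for every `β ≥ 1` and every measurable `u : ℝⁿ × (0,∞) → ℂ`,
`‖𝓝^β u‖_{L¹(ℝⁿ)} ≤ C βⁿ ‖𝓝¹ u‖_{L¹(ℝⁿ)}`. -/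
theorem stmt7 (n : ℕ) (hn : 1 ≤ n) :
    ∃ C : ℝ, 0 < C ∧
      ∀ β : ℝ, 1 ≤ β →
        ∀ u : EuclideanSpace ℝ (Fin n) × ℝ → ℂ, Measurable u →
          ∫⁻ x, ntMax n β u x ≤ ENNReal.ofReal (C * β ^ n) * ∫⁻ x, ntMax n 1 u x :=
  stmt7_general n
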